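/- Let B be a bialgebra. Define on the collection 𝔹 with 𝔹(n) := B^{⊗n} the partial compositions (u₁⊗⋯⊗u_m) ∘_i (v₁⊗⋯⊗v_n) := u₁⊗⋯⊗u_{i-1} ⊗ Δ^{n-1}(u_i)·(v₁⊗⋯⊗v_n) ⊗ u_{i+1}⊗⋯⊗u_m. Then these compositions satisfy the operad associativity axiom: for u ∈ B^{⊗a}, v ∈ B^{⊗b}, w ∈ B^{⊗c} and j ≤ i < b+j one has (u ∘_j v) ∘_i w = u ∘_j (v ∘_{i-j+1} w), and this follows from (and requires) the coassociativity identity Δ^{b+c-2} = (id^{⊗(i-1)} ⊗ Δ^{c-1} ⊗ id^{⊗(b-i)}) ∘ Δ^{b-1}. -/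

import Mathlib

open TensorProduct Coalgebra

universe u

section TpowB

variable (k : Type u) [CommRing k]
variable (B : Type u) [Ring B] [Bialgebra k B]

/-- The iterated tensor power `B^{⊗n}` of the bialgebra `B`, as a `k`-algebra
(with `B^{⊗0} = k`, `B^{⊗(n+1)} = B^{⊗n} ⊗ B`). -/
noncomputable def TpowB : ℕ → AlgCat.{u} k
  | 0 => AlgCat.of k k
  | n + 1 => AlgCat.of k (TpowB n ⊗[k] B)

/-- The iterated coproduct `Δ^{n-1} : B → B^{⊗n}` (with `Δ^{-1} = ε`, `Δ^0 = id`). -/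
noncomputable def comulIter : (n : ℕ) → (B →ₗ[k] TpowB k B n)
  | 0 => Coalgebra.counit (R := k) (A := B)
  | n + 1 => (TensorProduct.map (comulIter n) LinearMap.id)
      ∘ₗ (Coalgebra.comul (R := k) (A := B))

/-- The canonical splitting `B^{⊗(a+b)} ≅ B^{⊗a} ⊗ B^{⊗b}`. -/
noncomputable def tpowSplit : (a b : ℕ) → (TpowB k B (a + b) ≃ₗ[k] TpowB k B a ⊗[k] TpowB k B b)
  | a, 0 => (TensorProduct.rid k (TpowB k B a)).symm
  | a, b + 1 =>
      (TensorProduct.congr (tpowSplit a b) (LinearEquiv.refl k B)).trans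
        (TensorProduct.assoc k (TpowB k B a) (TpowB k B b) B)

/-- The map `id^{⊗p} ⊗ Δ^{c-1} ⊗ id^{⊗q} : B^{⊗(p+1+q)} → B^{⊗(p+c+q)}`, applying the
iterated coproduct in position `p+1`. -/
noncomputable def comulAt (p q c : ℕ) : TpowB k B (p + 1 + q) →ₗ[k] TpowB k B (p + c + q) :=
  (tpowSplit k B (p + c) q).symm.toLinearMap
    ∘ₗ TensorProduct.map (tpowSplit k B p c).symm.toLinearMap LinearMap.id
    ∘ₗ TensorProduct.map (TensorProduct.map LinearMap.id (comulIter k B c)) LinearMap.id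
    ∘ₗ (tpowSplit k B (p + 1) q).toLinearMap

/-- The embedding `v ↦ 1^{⊗p} ⊗ v ⊗ 1^{⊗q} : B^{⊗c} → B^{⊗(p+c+q)}`. -/
noncomputable def embedAt (p q c : ℕ) : TpowB k B c →ₗ[k] TpowB k B (p + c + q) :=
  (tpowSplit k B (p + c) q).symm.toLinearMap
    ∘ₗ ((TensorProduct.mk k (TpowB k B (p + c)) (TpowB k B q)).flip 1)
    ∘ₗ (tpowSplit k B p c).symm.toLinearMap
    ∘ₗ (TensorProduct.mk k (TpowB k B p) (TpowB k B c) 1)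

/-- The operadic partial composition of the operad `𝔹` built from the bialgebra `B`:
`(u₁⊗⋯⊗u_m) ∘ᵢ (v₁⊗⋯⊗v_n) = u₁⊗⋯⊗u_{i-1} ⊗ Δ^{n-1}(u_i)(v₁⊗⋯⊗v_n) ⊗ u_{i+1}⊗⋯⊗u_m`,
written with `i = p + 1`, `m = p + 1 + q`, `n = c`. -/
noncomputable def circB (p q c : ℕ) (u : TpowB k B (p + 1 + q)) (v : TpowB k B c) :
    TpowB k B (p + c + q) :=
  comulAt k B p q c u * embedAt k B p q c v

/-- Transport along an equality of tensor-power lengths. -/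
noncomputable def tpowCast : ∀ {a b : ℕ}, a = b → (TpowB k B a ≃ₗ[k] TpowB k B b)
  | _, _, rfl => LinearEquiv.refl _ _

end TpowB

/-!
`circB u v = comulAt u * embedAt v`, where `comulAt` applies `Δ^{c-1}` in one slot and `embedAt`
pads with units. Both are multiplicative because `Δ` and `ε` are algebra maps, so associativity
splits into three identities of linear maps (up to the casts): coassociativity
`comulAt ∘ comulAt = comulAt`, naturality `comulAt ∘ embedAt = embedAt ∘ comulAt`, and
`embedAt ∘ embedAt = embedAt`. Each follows by peeling off the last tensor factor, by induction on
the number of factors to the right of the active slot and then on `c`; the only input is that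
`Δ` and `ε` applied to the last factor form a coassociative, counital coaction
`A ⊗ B → (A ⊗ B) ⊗ B`.
-/
open LinearMap (rTensor lTensor)

section RightCoaction

variable (k : Type u) [CommRing k] (B : Type u) [Ring B] [Bialgebra k B]

noncomputable def comulRight (A : Type*) [Ring A] [Algebra k A] :
    A ⊗[k] B →ₐ[k] (A ⊗[k] B) ⊗[k] B :=
  (Algebra.TensorProduct.assoc k k k A B B).symm.toAlgHom.comp
    (Algebra.TensorProduct.map (AlgHom.id k A) (Bialgebra.comulAlgHom k B))

noncomputable def counitRight (A : Type*) [Ring A] [Algebra k A] : A ⊗[k] B →ₐ[k] A :=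
  (Algebra.TensorProduct.rid k k A).toAlgHom.comp
    (Algebra.TensorProduct.map (AlgHom.id k A) (Bialgebra.counitAlgHom k B))

variable {k B}
variable {A C : Type*} [Ring A] [Algebra k A] [Ring C] [Algebra k C]

@[simp]
lemma comulRight_tmul (a : A) (b : B) :
    comulRight k B A (a ⊗ₜ b) = (TensorProduct.assoc k A B B).symm (a ⊗ₜ comul (R := k) b) := rfl

@[simp]
lemma counitRight_tmul (a : A) (b : B) : counitRight k B A (a ⊗ₜ b) = counit (R := k) b • a := rfl

lemma toLinearMap_comulRight : (comulRight k B A).toLinearMap =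
    (TensorProduct.assoc k A B B).symm.toLinearMap ∘ₗ lTensor A comul :=
  TensorProduct.ext' fun _ _ => rfl

lemma comulRight_comp_rTensor (f : A →ₗ[k] C) :
    (comulRight k B C).toLinearMap ∘ₗ rTensor B f =
      rTensor B (rTensor B f) ∘ₗ (comulRight k B A).toLinearMap := by
  rw [toLinearMap_comulRight, toLinearMap_comulRight, LinearMap.comp_assoc,
    LinearMap.lTensor_comp_rTensor, ← LinearMap.rTensor_comp_lTensor, ← LinearMap.comp_assoc,
    ← LinearMap.comp_assoc]
  congr 1
  exact TensorProduct.ext_threefold' fun _ _ _ => rfl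

lemma counitRight_comp_rTensor (f : A →ₗ[k] C) :
    (counitRight k B C).toLinearMap ∘ₗ rTensor B f = f ∘ₗ (counitRight k B A).toLinearMap :=
  TensorProduct.ext' fun a b => by simp

lemma counitRight_comp_comulRight :
    (counitRight k B (A ⊗[k] B)).toLinearMap ∘ₗ (comulRight k B A).toLinearMap =
      LinearMap.id := by
  refine TensorProduct.ext' fun a b => ?_
  have key : ∀ d : B ⊗[k] B,
      counitRight k B (A ⊗[k] B) ((TensorProduct.assoc k A B B).symm (a ⊗ₜ d)) =
        a ⊗ₜ TensorProduct.rid k B (lTensor B counit d) := by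
    intro d
    induction d using TensorProduct.induction_on <;> simp_all [tmul_add]
  simp [key]

lemma comulRight_comp_comulRight :
    (comulRight k B (A ⊗[k] B)).toLinearMap ∘ₗ (comulRight k B A).toLinearMap =
      rTensor B (comulRight k B A).toLinearMap ∘ₗ (comulRight k B A).toLinearMap := by
  refine TensorProduct.ext' fun a b => ?_
  let Φ : B ⊗[k] (B ⊗[k] B) →ₗ[k] ((A ⊗[k] B) ⊗[k] B) ⊗[k] B :=
    (TensorProduct.assoc k (A ⊗[k] B) B B).symm.toLinearMap ∘ₗ
      (TensorProduct.assoc k A B (B ⊗[k] B)).symm.toLinearMap ∘ₗ TensorProduct.mk k A _ a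
  have hL : ∀ d : B ⊗[k] B,
      comulRight k B (A ⊗[k] B) ((TensorProduct.assoc k A B B).symm (a ⊗ₜ d)) =
        Φ (lTensor B comul d) := by
    intro d
    induction d using TensorProduct.induction_on <;> simp_all [Φ, tmul_add]
  have hR : ∀ d : B ⊗[k] B,
      rTensor B (comulRight k B A).toLinearMap ((TensorProduct.assoc k A B B).symm (a ⊗ₜ d)) =
        Φ (TensorProduct.assoc k B B B (rTensor B comul d)) := by
    intro d
    induction d using TensorProduct.induction_on with
    | zero => simp
    | add => simp_all [tmul_add]
    | tmul x y =>
      simp only [TensorProduct.assoc_symm_tmul, LinearMap.rTensor_tmul, AlgHom.toLinearMap_apply,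
        comulRight_tmul]
      generalize comul (R := k) x = e
      induction e using TensorProduct.induction_on <;> simp_all [Φ, add_tmul, tmul_add]
  simp only [LinearMap.comp_apply, AlgHom.toLinearMap_apply, comulRight_tmul, hL, hR,
    Coalgebra.coassoc_apply]

lemma rTensor_map_mul (f : A →ₗ[k] C) (hf : ∀ x y, f (x * y) = f x * f y) (x y : A ⊗[k] B) :
    rTensor B f (x * y) = rTensor B f x * rTensor B f y := by
  induction x using TensorProduct.induction_on with
  | zero => simp
  | add x₁ x₂ h₁ h₂ => simp [add_mul, h₁, h₂]
  | tmul a b =>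
    induction y using TensorProduct.induction_on with
    | zero => simp
    | add y₁ y₂ h₁ h₂ => simp [mul_add, h₁, h₂]
    | tmul a' b' => simp [hf]

end RightCoaction

section TensorPowers

-- Lets unification and instance search see `TpowB k B (n + 1)` as `TpowB k B n ⊗[k] B`.
attribute [reducible] TpowB

variable (k : Type u) [CommRing k] (B : Type u) [Ring B] [Bialgebra k B]

lemma tpowCast_succ {a b : ℕ} (h : a + 1 = b + 1) :
    (tpowCast k B h).toLinearMap =
      rTensor B (tpowCast k B (Nat.succ_injective h)).toLinearMap := by
  obtain rfl := Nat.succ_injective h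
  exact (LinearMap.rTensor_id _ _).symm

lemma tpowCast_mul {a b : ℕ} (h : a = b) (x y : TpowB k B a) :
    tpowCast k B h (x * y) = tpowCast k B h x * tpowCast k B h y := by
  subst h
  rfl

lemma tpowCast_one {a b : ℕ} (h : a = b) : tpowCast k B h 1 = 1 := by
  subst h
  rfl

lemma tpowSplit_symm_one (a b : ℕ) : (tpowSplit k B a b).symm 1 = 1 := by
  induction b with
  | zero => exact one_smul k (1 : TpowB k B a)
  | succ b ih =>
    change ((tpowSplit k B a b).symm 1 ⊗ₜ (1 : B) : TpowB k B (a + b) ⊗[k] B) = 1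
    rw [ih]
    rfl

lemma comulAt_zero_tmul (p c : ℕ) (y : TpowB k B p) (b : B) :
    comulAt k B p 0 c (y ⊗ₜ b : TpowB k B p ⊗[k] B) =
      (tpowSplit k B p c).symm (y ⊗ₜ comulIter k B c b) :=
  one_smul k _

lemma comulAt_succ_right (p q c : ℕ) :
    comulAt k B p (q + 1) c = rTensor B (comulAt k B p q c) := by
  refine TensorProduct.ext' fun y b => ?_
  obtain ⟨θ, rfl⟩ := (tpowSplit k B (p + 1) q).symm.surjective y
  induction θ using TensorProduct.induction_on with
  | zero => simp
  | add θ₁ θ₂ h₁ h₂ => simp_all [add_tmul]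
  | tmul x z =>
    simp [comulAt, tpowSplit]

lemma comulAt_zero_succ (p c : ℕ) :
    comulAt k B p 0 (c + 1) =
      rTensor B (comulAt k B p 0 c) ∘ₗ (comulRight k B (TpowB k B p)).toLinearMap := by
  refine TensorProduct.ext' fun y b => ?_
  rw [comulAt_zero_tmul]
  change (tpowSplit k B p (c + 1)).symm
      (y ⊗ₜ TensorProduct.map (comulIter k B c) LinearMap.id (comul (R := k) b)) = _
  simp only [LinearMap.comp_apply, AlgHom.toLinearMap_apply, comulRight_tmul]
  induction comul (R := k) b using TensorProduct.induction_on with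
  | zero => simp
  | add => simp_all [tmul_add]
  | tmul b₁ b₂ =>
    rw [TensorProduct.map_tmul, TensorProduct.assoc_symm_tmul, LinearMap.rTensor_tmul,
      comulAt_zero_tmul]
    rfl

lemma comulAt_zero_zero (p : ℕ) :
    comulAt k B p 0 0 = (counitRight k B (TpowB k B p)).toLinearMap :=
  TensorProduct.ext' fun y b => comulAt_zero_tmul k B p 0 y b

lemma embedAt_succ_right (p q c : ℕ) (v : TpowB k B c) :
    embedAt k B p (q + 1) c v = (embedAt k B p q c v ⊗ₜ (1 : B) : TpowB k B (p + c + q) ⊗[k] B) :=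
  rfl

lemma embedAt_zero_succ (p c : ℕ) :
    embedAt k B p 0 (c + 1) = rTensor B (embedAt k B p 0 c) :=
  TensorProduct.ext' fun _ _ => by simp [embedAt, tpowSplit]

lemma embedAt_zero_zero (p : ℕ) :
    embedAt k B p 0 0 = Algebra.linearMap k (TpowB k B p) := by
  ext
  simp [embedAt, tpowSplit]

lemma comulAt_mul (p q c : ℕ) (x y : TpowB k B (p + 1 + q)) :
    comulAt k B p q c (x * y) = comulAt k B p q c x * comulAt k B p q c y := by
  induction q with
  | succ q ih =>
    rw [comulAt_succ_right]
    exact rTensor_map_mul _ ih x y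
  | zero =>
    induction c generalizing x y with
    | zero =>
      rw [comulAt_zero_zero]
      exact map_mul (counitRight k B (TpowB k B p)) x y
    | succ c ih =>
      simp only [comulAt_zero_succ, LinearMap.comp_apply, AlgHom.toLinearMap_apply, map_mul]
      exact rTensor_map_mul _ ih _ _

lemma embedAt_mul (p q c : ℕ) (v w : TpowB k B c) :
    embedAt k B p q c (v * w) = embedAt k B p q c v * embedAt k B p q c w := by
  induction q with
  | succ q ih =>
    rw [embedAt_succ_right, embedAt_succ_right, embedAt_succ_right, ih,
      Algebra.TensorProduct.tmul_mul_tmul, mul_one]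
  | zero =>
    induction c with
    | zero =>
      rw [embedAt_zero_zero]
      exact map_mul (algebraMap k (TpowB k B p)) v w
    | succ c ih =>
      rw [embedAt_zero_succ]
      exact rTensor_map_mul _ ih v w

lemma embedAt_one (p c : ℕ) : embedAt k B p 0 c 1 = 1 :=
  (one_smul k _).trans (tpowSplit_symm_one k B p c)

lemma comulRight_comp_comulAt (p s : ℕ) :
    (comulRight k B (TpowB k B (p + s))).toLinearMap ∘ₗ comulAt k B p 0 (s + 1) =
      rTensor B (comulAt k B p 0 (s + 1)) ∘ₗ (comulRight k B (TpowB k B p)).toLinearMap := by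
  rw [comulAt_zero_succ, ← LinearMap.comp_assoc, comulRight_comp_rTensor, LinearMap.comp_assoc,
    comulRight_comp_comulRight, ← LinearMap.comp_assoc, ← LinearMap.rTensor_comp]

lemma counitRight_comp_comulAt (p s : ℕ) :
    (counitRight k B (TpowB k B (p + s))).toLinearMap ∘ₗ comulAt k B p 0 (s + 1) =
      comulAt k B p 0 s := by
  rw [comulAt_zero_succ, ← LinearMap.comp_assoc, counitRight_comp_rTensor, LinearMap.comp_assoc,
    counitRight_comp_comulRight, LinearMap.comp_id]

lemma comulAt_zero_comp_comulAt_zero (p s c : ℕ) (h : p + s + c = p + (s + c)) :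
    (tpowCast k B h).toLinearMap ∘ₗ comulAt k B (p + s) 0 c ∘ₗ comulAt k B p 0 (s + 1) =
      comulAt k B p 0 (s + c) := by
  induction c with
  | zero =>
    rw [comulAt_zero_zero, counitRight_comp_comulAt]
    exact LinearMap.id_comp _
  | succ c ih =>
    rw [comulAt_zero_succ, LinearMap.comp_assoc, comulRight_comp_comulAt, tpowCast_succ]
    simp only [← LinearMap.comp_assoc, ← LinearMap.rTensor_comp]
    rw [LinearMap.comp_assoc, ih]
    exact (comulAt_zero_succ k B p (s + c)).symm

lemma comulAt_zero_comp_embedAt_zero (p s c : ℕ) (h : p + s + c = p + (s + c)) :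
    (tpowCast k B h).toLinearMap ∘ₗ comulAt k B (p + s) 0 c ∘ₗ embedAt k B p 0 (s + 1) =
      embedAt k B p 0 (s + c) ∘ₗ comulAt k B s 0 c := by
  induction c with
  | zero =>
    rw [comulAt_zero_zero, comulAt_zero_zero, embedAt_zero_succ]
    exact TensorProduct.ext' fun y b => (map_smul (embedAt k B p 0 s) _ y).symm
  | succ c ih =>
    rw [comulAt_zero_succ, comulAt_zero_succ, LinearMap.comp_assoc, embedAt_zero_succ k B p s,
      comulRight_comp_rTensor, ← embedAt_zero_succ k B p s, tpowCast_succ]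
    simp only [← LinearMap.comp_assoc, ← LinearMap.rTensor_comp]
    rw [LinearMap.comp_assoc, ih, LinearMap.rTensor_comp, LinearMap.comp_assoc]
    exact congrArg (· ∘ₗ _) (embedAt_zero_succ k B p (s + c)).symm

lemma embedAt_zero_comp_embedAt_zero (p s c : ℕ) (h : p + s + c = p + (s + c)) :
    (tpowCast k B h).toLinearMap ∘ₗ embedAt k B (p + s) 0 c =
      embedAt k B p 0 (s + c) ∘ₗ embedAt k B s 0 c := by
  induction c with
  | zero =>
    rw [embedAt_zero_zero, embedAt_zero_zero]
    ext
    simpa using (tpowCast_one k B h).trans (embedAt_one k B p s).symm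
  | succ c ih =>
    rw [embedAt_zero_succ, embedAt_zero_succ, tpowCast_succ, ← LinearMap.rTensor_comp, ih,
      LinearMap.rTensor_comp]
    exact congrArg (· ∘ₗ _) (embedAt_zero_succ k B p (s + c)).symm

lemma comulAt_comp_comulAt_zero (p s t c : ℕ) (h₁ : p + (s + 1 + t) = p + s + 1 + t)
    (h₂ : p + s + c + t = p + (s + c + t)) :
    (tpowCast k B h₂).toLinearMap ∘ₗ comulAt k B (p + s) t c ∘ₗ
      (tpowCast k B h₁).toLinearMap ∘ₗ comulAt k B p 0 (s + 1 + t) =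
        comulAt k B p 0 (s + c + t) := by
  induction t with
  | zero =>
    have hid : (tpowCast k B h₁).toLinearMap = LinearMap.id := rfl
    rw [hid, LinearMap.id_comp]
    exact comulAt_zero_comp_comulAt_zero k B p s c h₂
  | succ t ih =>
    -- `induction` leaves indices such as `s + 1 + (t + 1)`, which `rw` does not unify with `_ + 1`.
    change (tpowCast k B h₂).toLinearMap ∘ₗ comulAt k B (p + s) (t + 1) c ∘ₗ
      (tpowCast k B h₁).toLinearMap ∘ₗ comulAt k B p 0 (s + 1 + t + 1) =
        comulAt k B p 0 (s + c + t + 1)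
    rw [comulAt_succ_right, comulAt_zero_succ, comulAt_zero_succ, tpowCast_succ,
      tpowCast_succ]
    simp only [← LinearMap.comp_assoc, ← LinearMap.rTensor_comp]
    simp only [LinearMap.comp_assoc, ih]

lemma comulAt_comp_comulAt (p q s t c : ℕ) (h₁ : p + (s + 1 + t) + q = p + s + 1 + (t + q))
    (h₂ : p + s + c + (t + q) = p + (s + c + t) + q) :
    (tpowCast k B h₂).toLinearMap ∘ₗ comulAt k B (p + s) (t + q) c ∘ₗ
      (tpowCast k B h₁).toLinearMap ∘ₗ comulAt k B p q (s + 1 + t) =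
        comulAt k B p q (s + c + t) := by
  induction q with
  | zero => exact comulAt_comp_comulAt_zero k B p s t c h₁ h₂
  | succ q ih =>
    change _ ∘ₗ comulAt k B (p + s) (t + q + 1) c ∘ₗ _ = _
    rw [comulAt_succ_right, comulAt_succ_right, comulAt_succ_right, tpowCast_succ, tpowCast_succ]
    simp only [← LinearMap.rTensor_comp, ih]

lemma comulAt_comp_embedAt_zero (p s t c : ℕ) (h₁ : p + (s + 1 + t) = p + s + 1 + t)
    (h₂ : p + s + c + t = p + (s + c + t)) :
    (tpowCast k B h₂).toLinearMap ∘ₗ comulAt k B (p + s) t c ∘ₗ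
      (tpowCast k B h₁).toLinearMap ∘ₗ embedAt k B p 0 (s + 1 + t) =
        embedAt k B p 0 (s + c + t) ∘ₗ comulAt k B s t c := by
  induction t with
  | zero =>
    have hid : (tpowCast k B h₁).toLinearMap = LinearMap.id := rfl
    rw [hid, LinearMap.id_comp]
    exact comulAt_zero_comp_embedAt_zero k B p s c h₂
  | succ t ih =>
    change (tpowCast k B h₂).toLinearMap ∘ₗ comulAt k B (p + s) (t + 1) c ∘ₗ
      (tpowCast k B h₁).toLinearMap ∘ₗ embedAt k B p 0 (s + 1 + t + 1) =
        embedAt k B p 0 (s + c + t + 1) ∘ₗ comulAt k B s (t + 1) c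
    rw [comulAt_succ_right, comulAt_succ_right, embedAt_zero_succ, embedAt_zero_succ,
      tpowCast_succ, tpowCast_succ]
    simp only [← LinearMap.rTensor_comp, ih]

lemma comulAt_comp_embedAt (p q s t c : ℕ) (h₁ : p + (s + 1 + t) + q = p + s + 1 + (t + q))
    (h₂ : p + s + c + (t + q) = p + (s + c + t) + q) :
    (tpowCast k B h₂).toLinearMap ∘ₗ comulAt k B (p + s) (t + q) c ∘ₗ
      (tpowCast k B h₁).toLinearMap ∘ₗ embedAt k B p q (s + 1 + t) =
        embedAt k B p q (s + c + t) ∘ₗ comulAt k B s t c := by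
  induction q with
  | zero => exact comulAt_comp_embedAt_zero k B p s t c h₁ h₂
  | succ q ih =>
    change _ ∘ₗ comulAt k B (p + s) (t + q + 1) c ∘ₗ _ = _
    refine LinearMap.ext fun v => ?_
    simp only [LinearMap.comp_apply, comulAt_succ_right, tpowCast_succ]
    exact congrArg (· ⊗ₜ (1 : B)) (LinearMap.congr_fun (ih (by omega) (by omega)) v)

lemma embedAt_zero_comp_embedAt (p s t c : ℕ) (h : p + s + c + t = p + (s + c + t)) :
    (tpowCast k B h).toLinearMap ∘ₗ embedAt k B (p + s) t c =
      embedAt k B p 0 (s + c + t) ∘ₗ embedAt k B s t c := by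
  induction t with
  | zero => exact embedAt_zero_comp_embedAt_zero k B p s c h
  | succ t ih =>
    change _ = embedAt k B p 0 (s + c + t + 1) ∘ₗ _
    refine LinearMap.ext fun w => ?_
    simp only [LinearMap.comp_apply, embedAt_zero_succ, tpowCast_succ]
    exact congrArg (· ⊗ₜ (1 : B)) (LinearMap.congr_fun (ih (by omega)) w)

lemma embedAt_comp_embedAt (p q s t c : ℕ) (h : p + s + c + (t + q) = p + (s + c + t) + q) :
    (tpowCast k B h).toLinearMap ∘ₗ embedAt k B (p + s) (t + q) c =
      embedAt k B p q (s + c + t) ∘ₗ embedAt k B s t c := by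
  induction q with
  | zero => exact embedAt_zero_comp_embedAt k B p s t c h
  | succ q ih =>
    change _ ∘ₗ embedAt k B (p + s) (t + q + 1) c = _
    refine LinearMap.ext fun w => ?_
    simp only [LinearMap.comp_apply, tpowCast_succ]
    exact congrArg (· ⊗ₜ (1 : B)) (LinearMap.congr_fun (ih (by omega)) w)

end TensorPowers

/-- Here `j = p + 1`, `a = p + 1 + q`, `i = j + s` and `b = s + 1 + t`. -/
theorem circB_assoc_inner
    (k : Type u) [CommRing k]
    (B : Type u) [Ring B] [Bialgebra k B]
    (p q s t c : ℕ)
    (u : TpowB k B (p + 1 + q)) (v : TpowB k B (s + 1 + t)) (w : TpowB k B c) :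
    tpowCast k B (by omega : (p + s) + c + (t + q) = p + (s + c + t) + q)
        (circB k B (p + s) (t + q) c
          (tpowCast k B (by omega : p + (s + 1 + t) + q = (p + s) + 1 + (t + q))
            (circB k B p q (s + 1 + t) u v)) w) =
      circB k B p q (s + c + t) u (circB k B s t c v w) := by
  have hu := LinearMap.congr_fun (comulAt_comp_comulAt k B p q s t c (by omega) (by omega)) u
  have hv := LinearMap.congr_fun (comulAt_comp_embedAt k B p q s t c (by omega) (by omega)) v
  have hw := LinearMap.congr_fun (embedAt_comp_embedAt k B p q s t c (by omega)) w
  simp only [LinearMap.comp_apply, LinearEquiv.coe_coe] at hu hv hw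
  simp only [circB, tpowCast_mul, comulAt_mul, embedAt_mul, hu, hv, hw, mul_assoc]
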